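/- arXiv:2103.14013 — 3 statements merged into one kernel-verified Lean document; each statement's English description precedes it below -/
import Mathlib

section
/- Let X be a well-founded basic code and define the tree rank ρ_X : X → Ordinal by well-founded recursion: ρ_X(η) is the supremum of ρ_X(η ++ [α]) + 1 over those ordinals α with η ++ [α] ∈ X (so leaves have tree rank 0). Then the code rank mirrors set-theoretic rank: for every η ∈ X, ZFSet.rank (decode_X(η)) = ρ_X(η); in particular ZFSet.rank (Decode(X)) = ρ_X([]). -/
universe u

/-- A *basic code*: a nonempty set of finite lists of ordinals that is closed under
prefixes and has no gaps. -/
def IsBasicCode (X : Set (List Ordinal.{u})) : Prop :=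
  X.Nonempty ∧
  (∀ s ∈ X, ∀ t : List Ordinal.{u}, t <+: s → t ∈ X) ∧
  (∀ s : List Ordinal.{u}, ∀ α₁ α₂ : Ordinal.{u}, α₁ < α₂ → s ++ [α₂] ∈ X → s ++ [α₁] ∈ X)

/-- The proper-extension relation on `X`: `ν` is below `η` iff `η` is a proper prefix of `ν`. -/
def Below (X : Set (List Ordinal.{u})) (ν η : {s : List Ordinal.{u} // s ∈ X}) : Prop :=
  (η : List Ordinal.{u}) <+: (ν : List Ordinal.{u}) ∧ (η : List Ordinal.{u}) ≠ (ν : List Ordinal.{u})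

/-- A basic code is *well-founded* if the proper-extension relation is well-founded on it. -/
def IsWFCode (X : Set (List Ordinal.{u})) : Prop :=
  IsBasicCode X ∧ WellFounded (Below X)

/-- `f` satisfies the defining recurrence of the decode function of the code `X`:
the members of `f s` are exactly the sets `f (s ++ [α])` for those `α` with `s ++ [α] ∈ X`. -/
def IsDecodeFun (X : Set (List Ordinal.{u})) (f : List Ordinal.{u} → ZFSet.{u}) : Prop :=
  ∀ s ∈ X, ∀ y : ZFSet.{u},
    y ∈ f s ↔ ∃ α : Ordinal.{u}, s ++ [α] ∈ X ∧ y = f (s ++ [α])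

/-- `r` satisfies the defining recurrence of the tree rank function of the code `X`:
`r s` is the least upper bound of the ordinals `r (s ++ [α]) + 1` over those `α`
with `s ++ [α] ∈ X` (so leaves get tree rank `0`). -/
def IsRankFun (X : Set (List Ordinal.{u})) (r : List Ordinal.{u} → Ordinal.{u}) : Prop :=
  ∀ s ∈ X,
    IsLUB {o : Ordinal.{u} | ∃ α : Ordinal.{u}, s ++ [α] ∈ X ∧ o = r (s ++ [α]) + 1} (r s)

/-! Both `ZFSet.rank` and the tree rank satisfy the same recurrence "least upper bound of the
successors of the values at the children", and decoding maps the children of a node onto the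
members of its decoding; so well-founded induction on the code shows that they agree. -/

theorem ZFSet.isLUB_rank (x : ZFSet.{u}) :
    IsLUB {o : Ordinal.{u} | ∃ y ∈ x, o = ZFSet.rank y + 1} (ZFSet.rank x) := by
  refine ⟨?_, fun o ho => ZFSet.rank_le_iff.2 fun y hy => ?_⟩
  · rintro o ⟨y, hy, rfl⟩
    exact (ZFSet.rank_lt_of_mem hy).succ_le
  · exact (Order.lt_succ _).trans_le (ho ⟨y, hy, rfl⟩)

section

variable {X : Set (List Ordinal.{u})} {f : List Ordinal.{u} → ZFSet.{u}}
  {r : List Ordinal.{u} → Ordinal.{u}} {s : List Ordinal.{u}}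

theorem IsBasicCode.nil_mem (hX : IsBasicCode X) : [] ∈ X :=
  let ⟨s, hs⟩ := hX.1
  hX.2.1 s hs [] List.nil_prefix

theorem below_append_singleton {α : Ordinal.{u}} (hs : s ∈ X) (hsα : s ++ [α] ∈ X) :
    Below X ⟨s ++ [α], hsα⟩ ⟨s, hs⟩ :=
  ⟨List.prefix_append s [α], by simp⟩

theorem IsDecodeFun.rank_eq_of_children (hf : IsDecodeFun X f) (hr : IsRankFun X r) (hs : s ∈ X)
    (hchildren : ∀ α, s ++ [α] ∈ X → ZFSet.rank (f (s ++ [α])) = r (s ++ [α])) :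
    ZFSet.rank (f s) = r s := by
  refine (ZFSet.isLUB_rank (f s)).unique ?_
  convert hr s hs using 1
  ext o
  constructor
  · rintro ⟨y, hy, rfl⟩
    obtain ⟨α, hα, rfl⟩ := (hf s hs y).1 hy
    exact ⟨α, hα, by rw [hchildren α hα]⟩
  · rintro ⟨α, hα, rfl⟩
    exact ⟨_, (hf s hs _).2 ⟨α, hα, rfl⟩, by rw [hchildren α hα]⟩

end

/-- The tree rank of a node of a well-founded basic code equals the set-theoretic rank of
the set it decodes to; in particular the rank of `Decode X` is the tree rank of the root. -/
theorem rank_decode_eq_treeRank (X : Set (List Ordinal.{u})) (hX : IsWFCode X)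
    (f : List Ordinal.{u} → ZFSet.{u}) (hf : IsDecodeFun X f)
    (r : List Ordinal.{u} → Ordinal.{u}) (hr : IsRankFun X r) :
    (∀ s ∈ X, ZFSet.rank (f s) = r s) ∧ ZFSet.rank (f []) = r [] := by
  have hnode (η : {s // s ∈ X}) : ZFSet.rank (f η) = r η := by
    induction η using hX.2.induction with
    | _ η ih =>
      exact hf.rank_eq_of_children hr η.2 fun α hα => ih _ (below_append_singleton η.2 hα)
  exact ⟨fun s hs => hnode ⟨s, hs⟩, hnode ⟨[], hX.1.nil_mem⟩⟩
end

section
/- (Canonicalization) For every x : ZFSet there exists a well-founded basic code X with Decode(X) = x which is *canonical*: for all η, ν ∈ X, if decode_X(η) = decode_X(ν), then the subtrees of X at η and at ν are literally identical, i.e. for every list s of ordinals, η ++ s ∈ X if and only if ν ++ s ∈ X. -/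
universe u

/-!
Enumerate the members of every set `y` as `enum y α` for `α < enumBound y`, fixing one such
enumeration per set (not per occurrence). Following indices down from `x` gives a tree of paths;
the code of `x` consists of the paths that can be followed, and a path decodes to the set it
reaches. Since the subtree below a path depends only on the set reached there, two nodes
decoding to the same set carry the same subtree. Well-foundedness needs no separate argument:
any prefix-closed code with a decoding into `ZFSet` inherits well-foundedness from `∈`.
-/

theorem IsDecodeFun.transGen_mem {X : Set (List Ordinal.{u})} {f : List Ordinal.{u} → ZFSet.{u}}
    (hf : IsDecodeFun X f) (hX : ∀ s ∈ X, ∀ t : List Ordinal.{u}, t <+: s → t ∈ X)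
    (s t : List Ordinal.{u}) (ht : t ≠ []) (hst : s ++ t ∈ X) :
    Relation.TransGen (· ∈ ·) (f (s ++ t)) (f s) := by
  induction t generalizing s with
  | nil => exact absurd rfl ht
  | cons α t ih =>
    have hsα : s ++ [α] ∈ X := hX _ hst _ ⟨t, by simp⟩
    have hmem : f (s ++ [α]) ∈ f s :=
      (hf s (hX _ hsα _ (List.prefix_append s _)) _).2 ⟨α, hsα, rfl⟩
    rcases eq_or_ne t [] with rfl | hne
    · exact .single hmem
    · rw [show s ++ α :: t = s ++ [α] ++ t by simp] at hst ⊢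
      exact (ih (s ++ [α]) hne hst).tail hmem

theorem IsDecodeFun.wellFounded_below {X : Set (List Ordinal.{u})}
    {f : List Ordinal.{u} → ZFSet.{u}} (hf : IsDecodeFun X f)
    (hX : ∀ s ∈ X, ∀ t : List Ordinal.{u}, t <+: s → t ∈ X) : WellFounded (Below X) := by
  refine Subrelation.wf (r := InvImage (Relation.TransGen (· ∈ ·)) (f ·.1)) ?_
    (InvImage.wf _ ZFSet.mem_wf.transGen)
  intro ν η ⟨⟨t, hηt⟩, hne⟩
  have ht : t ≠ [] := by rintro rfl; simp [← hηt] at hne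
  rw [InvImage, ← hηt]
  exact hf.transGen_mem hX η t ht (hηt ▸ ν.2)

namespace ZFSet

theorem exists_ordinal_enum (y : ZFSet.{u}) :
    ∃ (o : Ordinal.{u}) (e : Ordinal.{u} → ZFSet.{u}), ∀ z, z ∈ y ↔ ∃ α < o, e α = z := by
  let r : Shrink.{u} y → Shrink.{u} y → Prop := WellOrderingRel
  let e : Ordinal.{u} → ZFSet.{u} := fun α =>
    if h : α < Ordinal.type r then ((equivShrink y).symm (Ordinal.enum r ⟨α, h⟩) : ZFSet) else ∅
  refine ⟨Ordinal.type r, e, fun z => ⟨fun hz => ?_, ?_⟩⟩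
  · refine ⟨Ordinal.typein r (equivShrink y ⟨z, hz⟩), Ordinal.typein_lt_type r _, ?_⟩
    simp [e, Ordinal.typein_lt_type r]
  · rintro ⟨α, hα, rfl⟩
    simp [e, hα]

noncomputable def enumBound (y : ZFSet.{u}) : Ordinal.{u} :=
  (exists_ordinal_enum y).choose

noncomputable def enum (y : ZFSet.{u}) : Ordinal.{u} → ZFSet.{u} :=
  (exists_ordinal_enum y).choose_spec.choose

theorem mem_iff_exists_enum {y z : ZFSet.{u}} : z ∈ y ↔ ∃ α < y.enumBound, y.enum α = z :=
  (exists_ordinal_enum y).choose_spec.choose_spec z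

noncomputable def follow : ZFSet.{u} → List Ordinal.{u} → Option ZFSet.{u}
  | y, [] => some y
  | y, α :: t => if α < y.enumBound then follow (y.enum α) t else none

theorem follow_append (y : ZFSet.{u}) (s t : List Ordinal.{u}) :
    y.follow (s ++ t) = (y.follow s).bind (follow · t) := by
  induction s generalizing y with
  | nil => rfl
  | cons α s ih =>
    simp only [List.cons_append, follow]
    split
    · exact ih _
    · rfl

theorem follow_append_of_follow_eq_some {x y : ZFSet.{u}} {s : List Ordinal.{u}}
    (h : x.follow s = some y) (t : List Ordinal.{u}) : x.follow (s ++ t) = y.follow t := by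
  rw [follow_append, h, Option.bind_some]

theorem follow_singleton (y : ZFSet.{u}) (α : Ordinal.{u}) :
    y.follow [α] = if α < y.enumBound then some (y.enum α) else none := by
  simp only [follow]

def canonicalCode (x : ZFSet.{u}) : Set (List Ordinal.{u}) :=
  {s | (x.follow s).isSome}

noncomputable def canonicalDecode (x : ZFSet.{u}) (s : List Ordinal.{u}) : ZFSet.{u} :=
  (x.follow s).getD ∅

theorem mem_canonicalCode_iff {x : ZFSet.{u}} {s : List Ordinal.{u}} :
    s ∈ x.canonicalCode ↔ ∃ y, x.follow s = some y :=
  Option.isSome_iff_exists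

theorem singleton_mem_canonicalCode_iff {y : ZFSet.{u}} {α : Ordinal.{u}} :
    [α] ∈ y.canonicalCode ↔ α < y.enumBound := by
  by_cases h : α < y.enumBound <;> simp [canonicalCode, follow_singleton, h]

theorem append_mem_canonicalCode_iff {x y : ZFSet.{u}} {s : List Ordinal.{u}}
    (h : x.follow s = some y) (t : List Ordinal.{u}) :
    s ++ t ∈ x.canonicalCode ↔ t ∈ y.canonicalCode := by
  simp only [canonicalCode, Set.mem_ofPred_eq, follow_append_of_follow_eq_some h]

theorem canonicalDecode_append {x y : ZFSet.{u}} {s : List Ordinal.{u}}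
    (h : x.follow s = some y) (t : List Ordinal.{u}) :
    x.canonicalDecode (s ++ t) = y.canonicalDecode t := by
  simp only [canonicalDecode, follow_append_of_follow_eq_some h]

theorem canonicalDecode_of_follow_eq_some {x y : ZFSet.{u}} {s : List Ordinal.{u}}
    (h : x.follow s = some y) : x.canonicalDecode s = y := by
  simp [canonicalDecode, h]

theorem canonicalDecode_singleton {y : ZFSet.{u}} {α : Ordinal.{u}} (hα : α < y.enumBound) :
    y.canonicalDecode [α] = y.enum α := by
  simp [canonicalDecode, follow_singleton, hα]

theorem canonicalCode_prefix_closed (x : ZFSet.{u}) :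
    ∀ s ∈ x.canonicalCode, ∀ t : List Ordinal.{u}, t <+: s → t ∈ x.canonicalCode := by
  rintro _ hs t ⟨r, rfl⟩
  simp only [canonicalCode, Set.mem_ofPred_eq, follow_append, Option.isSome_bind] at hs ⊢
  exact Option.isSome_of_any hs

theorem isDecodeFun_canonicalDecode (x : ZFSet.{u}) :
    IsDecodeFun x.canonicalCode x.canonicalDecode := by
  intro s hs z
  obtain ⟨y, hy⟩ := mem_canonicalCode_iff.1 hs
  simp only [canonicalDecode_of_follow_eq_some hy, append_mem_canonicalCode_iff hy,
    canonicalDecode_append hy, singleton_mem_canonicalCode_iff, mem_iff_exists_enum]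
  exact exists_congr fun α => and_congr_right fun hα => by rw [canonicalDecode_singleton hα, eq_comm]

theorem isWFCode_canonicalCode (x : ZFSet.{u}) : IsWFCode x.canonicalCode := by
  have hX := x.canonicalCode_prefix_closed
  refine ⟨⟨⟨[], rfl⟩, hX, fun s α₁ α₂ h12 h2 => ?_⟩,
    (isDecodeFun_canonicalDecode x).wellFounded_below hX⟩
  obtain ⟨y, hy⟩ := mem_canonicalCode_iff.1 (hX _ h2 s (List.prefix_append s _))
  rw [append_mem_canonicalCode_iff hy, singleton_mem_canonicalCode_iff] at h2 ⊢
  exact h12.trans h2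

theorem canonicalCode_subtree_eq {x : ZFSet.{u}} {η ν : List Ordinal.{u}}
    (hη : η ∈ x.canonicalCode) (hν : ν ∈ x.canonicalCode)
    (h : x.canonicalDecode η = x.canonicalDecode ν) (s : List Ordinal.{u}) :
    η ++ s ∈ x.canonicalCode ↔ ν ++ s ∈ x.canonicalCode := by
  obtain ⟨y, hy⟩ := mem_canonicalCode_iff.1 hη
  obtain ⟨z, hz⟩ := mem_canonicalCode_iff.1 hν
  rw [canonicalDecode_of_follow_eq_some hy, canonicalDecode_of_follow_eq_some hz] at h
  subst h
  rw [append_mem_canonicalCode_iff hy, append_mem_canonicalCode_iff hz]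

end ZFSet

/-- Canonicalization: every `ZFSet` is encoded by a *canonical* well-founded basic code,
one in which any two nodes decoding to the same set carry literally identical subtrees. -/
theorem exists_canonical_wfCode (x : ZFSet.{u}) :
    ∃ X : Set (List Ordinal.{u}), IsWFCode X ∧
      ∃ f : List Ordinal.{u} → ZFSet.{u}, IsDecodeFun X f ∧ f [] = x ∧
        ∀ η ∈ X, ∀ ν ∈ X, f η = f ν →
          ∀ s : List Ordinal.{u}, η ++ s ∈ X ↔ ν ++ s ∈ X :=
  ⟨x.canonicalCode, x.isWFCode_canonicalCode, x.canonicalDecode,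
    x.isDecodeFun_canonicalDecode, rfl,
    fun _ hη _ hν h => ZFSet.canonicalCode_subtree_eq hη hν h⟩
end

section
/- For every ordinal α, with 𝒪_α := {s : List Ordinal | s is strictly decreasing and every entry of s is < α} (a well-founded basic code), one has ZFSet.rank (Decode(𝒪_α)) = α. Consequently the map α ↦ Decode(𝒪_α) is injective: distinct ordinals have distinct canonical representative sets. -/
universe u

/-- The canonical code of the `α`-th von Neumann ordinal: the set of strictly decreasing
lists of ordinals all of whose entries are `< α`. -/
def ordCode (α : Ordinal.{u}) : Set (List Ordinal.{u}) :=
  {s : List Ordinal.{u} | List.Chain' (· > ·) s ∧ ∀ β ∈ s, β < α}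

/-!
The children of a node `s` of `ordCode α` are the lists `s ++ [γ]` with `γ` below the last
entry of `s` (below `α` for the root), so by induction on that last entry every decode
function sends `s` to the von Neumann ordinal `(s.getLastD α).toZFSet`. In particular
`Decode (ordCode α) = α.toZFSet`, which has rank `α`.
-/

open Ordinal

theorem mem_ordCode_iff_isChain_cons {α : Ordinal.{u}} {s : List Ordinal.{u}} :
    s ∈ ordCode α ↔ (α :: s).IsChain (· > ·) := by
  rw [ordCode, Set.mem_ofPred_eq, List.Chain', List.isChain_iff_pairwise,
    List.isChain_iff_pairwise, List.pairwise_cons, and_comm]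

theorem append_singleton_mem_ordCode_iff {α γ : Ordinal.{u}} {s : List Ordinal.{u}}
    (hs : s ∈ ordCode α) : s ++ [γ] ∈ ordCode α ↔ γ < s.getLastD α := by
  rw [mem_ordCode_iff_isChain_cons] at hs ⊢
  rw [← List.cons_append, List.isChain_append]
  simp [hs, List.getLast?_cons]

theorem isDecodeFun_ordCode (α : Ordinal.{u}) :
    IsDecodeFun (ordCode α) fun s => (s.getLastD α).toZFSet := by
  intro s hs y
  simp only [mem_toZFSet_iff, List.getLastD_concat, append_singleton_mem_ordCode_iff hs, eq_comm]

theorem IsDecodeFun.eq_toZFSet_getLastD {α : Ordinal.{u}} {f : List Ordinal.{u} → ZFSet.{u}}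
    (hf : IsDecodeFun (ordCode α) f) {s : List Ordinal.{u}} (hs : s ∈ ordCode α) :
    f s = (s.getLastD α).toZFSet := by
  induction h : s.getLastD α using WellFoundedLT.induction generalizing s with
  | _ b IH =>
    have child_iff {γ : Ordinal.{u}} : s ++ [γ] ∈ ordCode α ↔ γ < b :=
      h ▸ append_singleton_mem_ordCode_iff hs
    ext y
    rw [hf s hs y, mem_toZFSet_iff]
    constructor
    · rintro ⟨γ, hγ, rfl⟩
      exact ⟨γ, child_iff.1 hγ, (IH γ (child_iff.1 hγ) hγ List.getLastD_concat).symm⟩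
    · rintro ⟨γ, hγb, rfl⟩
      exact ⟨γ, child_iff.2 hγb, (IH γ hγb (child_iff.2 hγb) List.getLastD_concat).symm⟩

theorem IsDecodeFun.apply_nil {α : Ordinal.{u}} {f : List Ordinal.{u} → ZFSet.{u}}
    (hf : IsDecodeFun (ordCode α) f) : f [] = α.toZFSet :=
  hf.eq_toZFSet_getLastD (mem_ordCode_iff_isChain_cons.2 (List.isChain_singleton α))

/-- `Decode (ordCode α)` has set-theoretic rank `α`; consequently the map
`α ↦ Decode (ordCode α)` is injective. -/
theorem rank_decode_ordCode (α : Ordinal.{u}) :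
    (∃ f : List Ordinal.{u} → ZFSet.{u}, IsDecodeFun (ordCode α) f) ∧
    (∀ f : List Ordinal.{u} → ZFSet.{u}, IsDecodeFun (ordCode α) f →
      ZFSet.rank (f []) = α) ∧
    (∀ β : Ordinal.{u},
      ∀ f g : List Ordinal.{u} → ZFSet.{u},
        IsDecodeFun (ordCode α) f → IsDecodeFun (ordCode β) g →
          f [] = g [] → α = β) :=
  ⟨⟨_, isDecodeFun_ordCode α⟩,
    fun f hf => by rw [hf.apply_nil, rank_toZFSet],
    fun β f g hf hg hfg => toZFSet_injective (by rw [← hf.apply_nil, ← hg.apply_nil, hfg])⟩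
end
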